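/- Fix p ∈ (1,2) and let u(x) = x/|x| for x ∈ ℝ²∖{0}, with derivative Du(x) = I/|x| − (x⊗x)/|x|³. Then the matrix field x ↦ |x|^{2−p}·(A(x/|x|)·Du(x)) = |x|^{2−p}·(2I/|x| + (2(p−1)/(2−p))(x⊗x)/|x|³) is divergence-free on ℝ²∖{0}: for each i ∈ {1,2}, Σ_{κ=1,2} ∂/∂x_κ [ |x|^{2−p} ( 2δ_{iκ}/|x| + (2(p−1)/(2−p)) x_i x_κ/|x|³ ) ] = 0 for all x ≠ 0. -/

import Mathlib

open MeasureTheory Metric Set Filter RealInnerProductSpace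

noncomputable section

abbrev Euc (n : ℕ) := EuclideanSpace ℝ (Fin n)
abbrev Mat (N n : ℕ) := EuclideanSpace ℝ (Fin N × Fin n)

/-- Partial derivative `∂φ/∂x_κ` of a scalar test function. -/
def pd {n : ℕ} (φ : Euc n → ℝ) (κ : Fin n) (x : Euc n) : ℝ :=
  fderiv ℝ φ x (EuclideanSpace.single κ 1)

/-- `G` is the weak gradient of `u` on `Ω`. -/
def IsWeakGradient {n N : ℕ} (Ω : Set (Euc n)) (u : Euc n → Euc N)
    (G : Euc n → Mat N n) : Prop :=
  Measurable G ∧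
  ∀ φ : Euc n → ℝ, ContDiff ℝ (⊤ : ℕ∞) φ → HasCompactSupport φ → tsupport φ ⊆ Ω →
    ∀ i κ, ∫ x in Ω, u x i * pd φ κ x = - ∫ x in Ω, G x (i, κ) * φ x

/-- `u ∈ W^{1,p}(Ω, ℝ^N)` with weak gradient `G`. -/
def MemW1p {n N : ℕ} (Ω : Set (Euc n)) (p : ℝ) (u : Euc n → Euc N)
    (G : Euc n → Mat N n) : Prop :=
  MemLp u (ENNReal.ofReal p) (volume.restrict Ω) ∧
  MemLp G (ENNReal.ofReal p) (volume.restrict Ω) ∧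
  IsWeakGradient Ω u G

/-- classical gradient matrix of a smooth map -/
def smoothGrad {n N : ℕ} (φ : Euc n → Euc N) (x : Euc n) : Mat N n :=
  WithLp.toLp 2 fun iκ : Fin N × Fin n => fderiv ℝ (fun y => φ y iκ.1) x (EuclideanSpace.single iκ.2 1)

/-- `w ∈ W₀^{1,p}(Ω,ℝ^N)` -/
def MemW10 {n N : ℕ} (Ω : Set (Euc n)) (p : ℝ) (w : Euc n → Euc N) : Prop :=
  ∃ G, MemW1p Ω p w G ∧
    ∃ φ : ℕ → Euc n → Euc N,
      (∀ k, ContDiff ℝ (⊤ : ℕ∞) (φ k) ∧ HasCompactSupport (φ k) ∧ tsupport (φ k) ⊆ Ω) ∧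
      Tendsto (fun k =>
          eLpNorm (fun x => w x - φ k x) (ENNReal.ofReal p) (volume.restrict Ω)
          + eLpNorm (fun x => G x - smoothGrad (φ k) x) (ENNReal.ofReal p) (volume.restrict Ω))
        atTop (nhds 0)


/-- The map `u(x) = x/|x|`. -/
def uu (x : Euc 2) : Euc 2 := ‖x‖⁻¹ • x

/-- The pointwise derivative matrix of `x ↦ x/|x|`:
`Du(x)_{iκ} = δ_{iκ}/|x| − x_i x_κ/|x|³`. -/
def Dumat (x : Euc 2) : Mat 2 2 :=
  WithLp.toLp 2 fun iκ : Fin 2 × Fin 2 => (if iκ.1 = iκ.2 then ‖x‖⁻¹ else 0) - x iκ.1 * x iκ.2 / ‖x‖ ^ 3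

/-- Kronecker delta. -/
def kd (i j : Fin 2) : ℝ := if i = j then 1 else 0

/-- The coefficients `A^{κλ}_{ij}(u)` of the bilinear form of Giusti–Miranda type. -/
def Acoef (p : ℝ) (u : Euc 2) (κ l i j : Fin 2) : ℝ :=
  kd κ l * kd i j +
    (kd κ i + 2 * p / (2 - p) * (u i * u κ) / (1 + ‖u‖ ^ 2)) *
    (kd l j + 2 * p / (2 - p) * (u j * u l) / (1 + ‖u‖ ^ 2))

/-- The bilinear form `A(u)(z,w)`. -/
def Abil (p : ℝ) (u : Euc 2) (z w : Mat 2 2) : ℝ :=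
  ∑ κ, ∑ l, ∑ i, ∑ j, Acoef p u κ l i j * z (i, κ) * w (j, l)

/-- The matrix `A(u)z`, defined by `(A(u)z)·w = A(u)(z,w)` for all `w`. -/
def Amat (p : ℝ) (u : Euc 2) (z : Mat 2 2) : Mat 2 2 :=
  WithLp.toLp 2 fun jl : Fin 2 × Fin 2 => ∑ κ, ∑ i, Acoef p u κ jl.2 i jl.1 * z (i, κ)

/-- `T_u(z) = Tr z + (2p/(2−p)) (z·u⊗u)/(1+|u|²)`. -/
def Tmap (p : ℝ) (u : Euc 2) (z : Mat 2 2) : ℝ :=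
  (∑ i, z (i, i)) + 2 * p / (2 - p) * (∑ i, ∑ κ, z (i, κ) * (u i * u κ)) / (1 + ‖u‖ ^ 2)

/-- The constant `m_g`. -/
def mg (p : ℝ) (g : ℝ → ℝ) : ℝ :=
  (p - 1)⁻¹ * (1 + ⨆ s : ℝ, (|deriv g s| + 2 * |deriv (deriv g) s * s|))

/-- Admissibility of the cut-off function `g`: a smooth, even function `ℝ → [0,1]`
with `g(0) = 1` and `g ≡ 0` outside `(-1,1)`. -/
def GoodCutoff (g : ℝ → ℝ) : Prop :=
  ContDiff ℝ (⊤ : ℕ∞) g ∧ (∀ s, g s ∈ Set.Icc (0:ℝ) 1) ∧ (∀ s, g (-s) = g s) ∧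
    g 0 = 1 ∧ ∀ s : ℝ, 1 ≤ |s| → g s = 0

/-- The integrand `f(x,z) = (g(|z|²) + m_g A(x/|x|)(z,z))^{p/2}`. -/
def fInt (p : ℝ) (g : ℝ → ℝ) (x : Euc 2) (z : Mat 2 2) : ℝ :=
  (g (‖z‖ ^ 2) + mg p g * Abil p (‖x‖⁻¹ • x) z z) ^ (p / 2)

/-- The coefficients `a(v,z) = (g(|z|²) + m_g A(v)(z,z))^{(p−2)/2} A(v)z`. -/
def acoef (p : ℝ) (g : ℝ → ℝ) (v : Euc 2) (z : Mat 2 2) : Mat 2 2 :=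
  (g (‖z‖ ^ 2) + mg p g * Abil p v z z) ^ ((p - 2) / 2) • Amat p v z

/-- Rewriting the matrix field entries in `rpow`-of-`‖y‖²` form. -/
lemma lit_eq_aux (p c d : ℝ) (i κ : Fin 2) {y : Euc 2} (hy : y ≠ 0) :
    ‖y‖ ^ (2 - p) * (2 * d / ‖y‖ + c * (y i * y κ) / ‖y‖ ^ 3)
      = 2 * d * ((‖y‖^2 : ℝ) ^ ((1 - p)/2)) + c * y i * y κ * ((‖y‖^2 : ℝ) ^ (-(1 + p)/2)) := by
  have hr : (0:ℝ) < ‖y‖ := norm_pos_iff.2 hy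
  have key : ∀ a : ℝ, ((‖y‖^2 : ℝ) ^ (a/2)) = ‖y‖ ^ a := by
    intro a
    rw [← Real.rpow_natCast ‖y‖ 2, ← Real.rpow_mul hr.le]
    congr 1
    ring
  have e1 : ((‖y‖^2 : ℝ) ^ ((1-p)/2)) = ‖y‖ ^ (2-p) / ‖y‖ := by
    rw [key, show (1-p) = (2-p)-1 by ring, Real.rpow_sub hr, Real.rpow_one]
  have e2 : ((‖y‖^2 : ℝ) ^ (-(1+p)/2)) = ‖y‖ ^ (2-p) / ‖y‖ ^ 3 := by
    rw [show (-(1+p)/2) = ((2-p)-3)/2 by ring, key, Real.rpow_sub hr,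
      show ((‖y‖:ℝ) ^ (3:ℝ)) = ‖y‖ ^ (3:ℕ) by
        rw [← Real.rpow_natCast ‖y‖ 3]; norm_num]
  rw [e1, e2]
  have h3 : (‖y‖:ℝ) ^ (3:ℕ) ≠ 0 := pow_ne_zero _ hr.ne'
  field_simp

/-- Explicit Fréchet derivative of the nice form of the matrix field entries. -/
lemma hasF_aux (p c d : ℝ) (i κ : Fin 2) (x : Euc 2) (hx : x ≠ 0) :
    HasFDerivAt (fun y : Euc 2 =>
        2 * d * ((‖y‖^2 : ℝ) ^ ((1 - p)/2)) + c * y i * y κ * ((‖y‖^2 : ℝ) ^ (-(1 + p)/2)))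
      ((2 * d * (((1-p)/2) * (‖x‖^2) ^ ((1-p)/2 - 1))) • (2 • (innerSL ℝ x))
        + ((c * (x κ) * ((‖x‖^2) ^ (-(1+p)/2))) • (EuclideanSpace.proj i : Euc 2 →L[ℝ] ℝ)
            + (c * (x i) * ((‖x‖^2) ^ (-(1+p)/2))) • (EuclideanSpace.proj κ : Euc 2 →L[ℝ] ℝ)
            + (c * x i * x κ * ((-(1+p)/2) * (‖x‖^2) ^ (-(1+p)/2 - 1))) • (2 • (innerSL ℝ x)))) x := by
  have hne : (‖x‖^2 : ℝ) ≠ 0 := pow_ne_zero 2 (norm_ne_zero_iff.2 hx)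
  have hN : HasFDerivAt (fun y : Euc 2 => (‖y‖^2 : ℝ)) (2 • (innerSL ℝ x)) x :=
    (hasStrictFDerivAt_norm_sq x).hasFDerivAt
  have hNa := hN.rpow_const (p := (1-p)/2) (Or.inl hne)
  have hNb := hN.rpow_const (p := -(1+p)/2) (Or.inl hne)
  have hpi : HasFDerivAt (fun y : Euc 2 => y i) (EuclideanSpace.proj i : Euc 2 →L[ℝ] ℝ) x :=
    (EuclideanSpace.proj (𝕜 := ℝ) i : Euc 2 →L[ℝ] ℝ).hasFDerivAt
  have hpκ : HasFDerivAt (fun y : Euc 2 => y κ) (EuclideanSpace.proj κ : Euc 2 →L[ℝ] ℝ) x :=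
    (EuclideanSpace.proj (𝕜 := ℝ) κ : Euc 2 →L[ℝ] ℝ).hasFDerivAt
  have h1 := hNa.const_mul (2 * d)
  have h2 := (((hpi.const_mul c).mul hpκ).mul hNb)
  refine (h1.add h2).congr_fderiv ?_
  ext v
  simp [ContinuousLinearMap.smul_apply, mul_comm, mul_assoc, mul_left_comm]
  ring

set_option maxHeartbeats 1000000 in
/-- the matrix field `x ↦ |x|^{2−p} (A(x/|x|) Du(x))`, which equals
`|x|^{2−p}(2I/|x| + (2(p−1)/(2−p)) x⊗x/|x|³)`, is divergence-free on `ℝ²∖{0}`. -/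
theorem statement19 (p : ℝ) (hp : p ∈ Set.Ioo (1:ℝ) 2) (x : Euc 2) (hx : x ≠ 0) :
    (‖x‖ ^ (2 - p) • Amat p (‖x‖⁻¹ • x) (Dumat x) =
      (WithLp.toLp 2 (fun iκ : Fin 2 × Fin 2 => ‖x‖ ^ (2 - p) *
        (2 * kd iκ.1 iκ.2 / ‖x‖ + 2 * (p - 1) / (2 - p) * (x iκ.1 * x iκ.2) / ‖x‖ ^ 3)) :
        Mat 2 2)) ∧
    ∀ i : Fin 2,
      (∀ κ : Fin 2, DifferentiableAt ℝ
        (fun y : Euc 2 => ‖y‖ ^ (2 - p) *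
          (2 * kd i κ / ‖y‖ + 2 * (p - 1) / (2 - p) * (y i * y κ) / ‖y‖ ^ 3)) x) ∧
      ∑ κ : Fin 2, fderiv ℝ
        (fun y : Euc 2 => ‖y‖ ^ (2 - p) *
          (2 * kd i κ / ‖y‖ + 2 * (p - 1) / (2 - p) * (y i * y κ) / ‖y‖ ^ 3)) x
        (EuclideanSpace.single κ 1) = 0 := by
  have hr : (0:ℝ) < ‖x‖ := norm_pos_iff.2 hx
  have hrne : ‖x‖ ≠ 0 := hr.ne'
  have hsum : x 0 * x 0 + x 1 * x 1 = ‖x‖ ^ 2 := by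
    rw [EuclideanSpace.norm_sq_eq, Fin.sum_univ_two]
    simp [sq]
  have h2p : (2:ℝ) - p ≠ 0 := by have := hp.2; intro h; linarith
  constructor
  · -- Part 1: the algebraic identity
    have hu : ‖(‖x‖⁻¹ • x)‖ = 1 := by
      rw [norm_smul]; simp [abs_of_pos (inv_pos.2 hr), inv_mul_cancel₀ hrne]
    have hui : ∀ i, (‖x‖⁻¹ • x) i = ‖x‖⁻¹ * x i := fun i => rfl
    ext iκ
    rw [PiLp.toLp_apply]
    have happ : (‖x‖ ^ (2-p) • Amat p (‖x‖⁻¹ • x) (Dumat x)) iκ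
        = ‖x‖ ^ (2-p) * Amat p (‖x‖⁻¹ • x) (Dumat x) iκ := rfl
    rw [happ]
    congr 1
    obtain ⟨i, κ⟩ := iκ
    have hs := hsum
    fin_cases i <;> fin_cases κ <;>
      simp only [Amat, Acoef, Dumat, kd, hu, hui, Fin.sum_univ_two, Fin.mk_zero, Fin.mk_one,
        Fin.isValue] <;>
      generalize x 0 = a at hs ⊢ <;>
      generalize x 1 = b at hs ⊢ <;>
      generalize hR : ‖x‖ = r at hr hrne hs ⊢ <;>
      norm_num
    · linear_combination (norm := (field_simp; ring))
        (-(1 + p/(2-p) * (a*a+b*b)/r^2) * (1 + p/(2-p)*a*a/r^2) / r^3) * hs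
    · linear_combination (norm := (field_simp; ring))
        (-(1 + p/(2-p) * (a*a+b*b)/r^2) * (p/(2-p)*a*b/r^2) / r^3) * hs
    · linear_combination (norm := (field_simp; ring))
        (-(1 + p/(2-p) * (a*a+b*b)/r^2) * (p/(2-p)*b*a/r^2) / r^3) * hs
    · linear_combination (norm := (field_simp; ring))
        (-(1 + p/(2-p) * (a*a+b*b)/r^2) * (1 + p/(2-p)*b*b/r^2) / r^3) * hs
  · -- Part 2: divergence-free
    intro i
    set c : ℝ := 2 * (p - 1) / (2 - p) with hc
    have hev : ∀ κ : Fin 2,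
        (fun y : Euc 2 => ‖y‖ ^ (2 - p) *
            (2 * kd i κ / ‖y‖ + c * (y i * y κ) / ‖y‖ ^ 3)) =ᶠ[nhds x]
        (fun y : Euc 2 =>
          2 * kd i κ * ((‖y‖^2 : ℝ) ^ ((1 - p)/2))
            + c * y i * y κ * ((‖y‖^2 : ℝ) ^ (-(1 + p)/2))) := by
      intro κ
      filter_upwards [IsOpen.mem_nhds isOpen_compl_singleton hx] with y hy
      exact lit_eq_aux p c (kd i κ) i κ hy
    have hF : ∀ κ : Fin 2, HasFDerivAt (fun y : Euc 2 =>
          2 * kd i κ * ((‖y‖^2 : ℝ) ^ ((1 - p)/2))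
            + c * y i * y κ * ((‖y‖^2 : ℝ) ^ (-(1 + p)/2)))
        ((2 * kd i κ * (((1-p)/2) * (‖x‖^2) ^ ((1-p)/2 - 1))) • (2 • (innerSL ℝ x))
          + ((c * (x κ) * ((‖x‖^2) ^ (-(1+p)/2))) • (EuclideanSpace.proj i : Euc 2 →L[ℝ] ℝ)
              + (c * (x i) * ((‖x‖^2) ^ (-(1+p)/2))) • (EuclideanSpace.proj κ : Euc 2 →L[ℝ] ℝ)
              + (c * x i * x κ * ((-(1+p)/2) * (‖x‖^2) ^ (-(1+p)/2 - 1))) • (2 • (innerSL ℝ x)))) x :=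
      fun κ => hasF_aux p c (kd i κ) i κ x hx
    constructor
    · exact fun κ => (hev κ).differentiableAt_iff.mpr (hF κ).differentiableAt
    have hfd : ∀ κ : Fin 2, fderiv ℝ (fun y : Euc 2 => ‖y‖ ^ (2 - p) *
            (2 * kd i κ / ‖y‖ + c * (y i * y κ) / ‖y‖ ^ 3)) x
        = ((2 * kd i κ * (((1-p)/2) * (‖x‖^2) ^ ((1-p)/2 - 1))) • (2 • (innerSL ℝ x))
          + ((c * (x κ) * ((‖x‖^2) ^ (-(1+p)/2))) • (EuclideanSpace.proj i : Euc 2 →L[ℝ] ℝ)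
              + (c * (x i) * ((‖x‖^2) ^ (-(1+p)/2))) • (EuclideanSpace.proj κ : Euc 2 →L[ℝ] ℝ)
              + (c * x i * x κ * ((-(1+p)/2) * (‖x‖^2) ^ (-(1+p)/2 - 1))) • (2 • (innerSL ℝ x)))) :=
      fun κ => ((hev κ).fderiv_eq).trans (hF κ).fderiv
    rw [Fin.sum_univ_two, hfd 0, hfd 1]
    have hpos : (0:ℝ) < ‖x‖^2 := pow_pos hr 2
    have hAB : ((‖x‖^2 : ℝ)) ^ ((1-p)/2 - 1) = (‖x‖^2 : ℝ) ^ (-(1+p)/2) := by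
      congr 1; ring
    have hB' : (‖x‖^2 : ℝ) * (‖x‖^2 : ℝ) ^ (-(1+p)/2 - 1) = (‖x‖^2 : ℝ) ^ (-(1+p)/2) := by
      nth_rewrite 1 [← Real.rpow_one (‖x‖^2 : ℝ)]
      rw [← Real.rpow_add hpos]
      congr 1; ring
    have hinv : (2 - p) * (2 - p)⁻¹ = (1:ℝ) := mul_inv_cancel₀ h2p
    have hproj : ∀ (j κ : Fin 2), (EuclideanSpace.proj j : Euc 2 →L[ℝ] ℝ)
        (EuclideanSpace.single κ 1) = kd j κ := by
      intro j κ
      show (EuclideanSpace.single κ (1:ℝ)) j = _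
      rw [EuclideanSpace.single_apply, kd]
    have hinner : ∀ κ : Fin 2, (innerSL ℝ x) (EuclideanSpace.single κ 1) = x κ := by
      intro κ
      simp [EuclideanSpace.inner_single_right]
    have hkd : kd i 0 * x 0 + kd i 1 * x 1 = x i := by
      fin_cases i <;> simp [kd]
    have hkd2 : ∀ κ : Fin 2, kd κ κ = 1 := by intro κ; simp [kd]
    simp only [ContinuousLinearMap.add_apply, ContinuousLinearMap.smul_apply, smul_eq_mul,
      hproj, hinner, hAB, hkd2]
    linear_combination ((2*(1-p)+c) * ((‖x‖^2:ℝ) ^ (-(1+p)/2))) * hkd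
      + (c*(-(1+p))*(x i)*((‖x‖^2:ℝ) ^ (-(1+p)/2-1))) * hsum
      + (-(c*(1+p))*(x i)) * hB'
      + (2*(p-1)*(x i)*((‖x‖^2:ℝ) ^ (-(1+p)/2))) * hinv
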